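/- (Purely imaginary leading eigenvalues at criticality; eigenvalue condition in the proof of Theorem 1.) Suppose d > 0, u ≥ 0, K > 0, and let λ† ∈ σ(A_a), μ† ∈ σ(A_o) generate a leading eigenvalue, i.e., Re(α + γλ† + βμ† + δλ†μ†) = K. Set u* := d/K and ω₀ := Im(γλ† + βμ† + δλ†μ†). Then η(u*, λ†, μ†) = i·u*·ω₀ is a purely imaginary eigenvalue of J(u*), its complex conjugate −i·u*·ω₀ is also an eigenvalue of J(u*), every eigenvalue of J(u*) has real part ≤ 0, and for every real u the map u ↦ Re(η(u, λ†, μ†)) equals K(u − u*), so it crosses zero at u = u* with strictly positive derivative K. -/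

import Mathlib

open Matrix Complex Polynomial
open scoped Kronecker

/-- The complex spectrum of a real square matrix: the set of complex roots of its
characteristic polynomial. -/
noncomputable def specC {n : Type*} [Fintype n] [DecidableEq n]
    (M : Matrix n n ℝ) : Set ℂ :=
  {z : ℂ | ((M.map (Complex.ofReal)).charpoly).IsRoot z}

/-- The Jacobian matrix `J(u)` of the belief dynamics at the origin. -/
noncomputable def Jmat {Na No : ℕ}
    (Aa : Matrix (Fin Na) (Fin Na) ℝ) (Ao : Matrix (Fin No) (Fin No) ℝ)
    (d u α γ β δ : ℝ) : Matrix (Fin Na × Fin No) (Fin Na × Fin No) ℝ :=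
  (-d + u * α) • (1 : Matrix (Fin Na × Fin No) (Fin Na × Fin No) ℝ)
    + (u * γ) • (Aa ⊗ₖ (1 : Matrix (Fin No) (Fin No) ℝ))
    + (u * β) • ((1 : Matrix (Fin Na) (Fin Na) ℝ) ⊗ₖ Ao)
    + (u * δ) • (Aa ⊗ₖ Ao)

/-- The generating map `η(u, λ, μ) = −d + u(α + γλ + βμ + δλμ)`. -/
noncomputable def ηgen (d u α γ β δ : ℝ) (l m : ℂ) : ℂ :=
  -(d : ℂ) + (u : ℂ) * ((α : ℂ) + (γ : ℂ) * l + (β : ℂ) * m + (δ : ℂ) * l * m)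

/-! `P = A_a ⊗ 1` and `Q = 1 ⊗ A_o` commute, and `J(u)` is the polynomial
`(-d + uα) + uγ P + uβ Q + uδ PQ` in them. Each eigenspace of `J(u)` is therefore invariant
under `P` and `Q` and contains a common eigenvector of both; its slices are eigenvectors of
`A_a` and `A_o`, so every eigenvalue of `J(u)` is some `η(u, λ, μ)`, and tensoring eigenvectors
gives the converse. At `u* = d / K` the maximality of `K` gives
`Re η(u*, λ, μ) ≤ -d + u* K = 0`, with equality at the leading pair; conjugates of eigenvalues
are eigenvalues because `J(u*)` is real. -/

namespace Module.End

variable {K V : Type*} [Field K] [IsAlgClosed K] [AddCommGroup V] [Module K V]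
  [FiniteDimensional K V]

theorem exists_hasEigenvector_mem_of_mapsTo (f : End K V) {p : Submodule K V} (hp : p ≠ ⊥)
    (hf : Set.MapsTo f p p) : ∃ c v, v ∈ p ∧ f.HasEigenvector c v := by
  have : Nontrivial p := Submodule.nontrivial_iff_ne_bot.mpr hp
  obtain ⟨c, hc⟩ := exists_eigenvalue (f.restrict fun x hx => hf hx)
  obtain ⟨⟨v, hvp⟩, hv⟩ := hc.exists_hasEigenvector
  refine ⟨c, v, hvp, mem_eigenspace_iff.mpr ?_, fun h => hv.2 (by simpa using h)⟩
  simpa [Subtype.ext_iff] using mem_eigenspace_iff.mp hv.1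

theorem exists_common_hasEigenvector_mem {f g : End K V} (hfg : Commute f g)
    {p : Submodule K V} (hp : p ≠ ⊥) (hf : Set.MapsTo f p p) (hg : Set.MapsTo g p p) :
    ∃ a b v, v ∈ p ∧ f.HasEigenvector a v ∧ g.HasEigenvector b v := by
  obtain ⟨a, v, hvp, hv⟩ := f.exists_hasEigenvector_mem_of_mapsTo hp hf
  have hq : p ⊓ f.eigenspace a ≠ ⊥ :=
    (Submodule.ne_bot_iff _).mpr ⟨v, Submodule.mem_inf.mpr ⟨hvp, hv.1⟩, hv.2⟩
  have hgq : Set.MapsTo g (p ⊓ f.eigenspace a) (p ⊓ f.eigenspace a) := fun x hx =>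
    ⟨hg hx.1, mapsTo_genEigenspace_of_comm hfg a 1 hx.2⟩
  obtain ⟨b, w, ⟨hwp, hwf⟩, hw⟩ := g.exists_hasEigenvector_mem_of_mapsTo hq hgq
  exact ⟨a, b, w, hwp, ⟨hwf, hw.2⟩, hw⟩

end Module.End

namespace Matrix

theorem hasEigenvector_toLin'_iff {R n : Type*} [CommRing R] [Fintype n] [DecidableEq n]
    {M : Matrix n n R} {z : R} {v : n → R} :
    Module.End.HasEigenvector (toLin' M) z v ↔ M *ᵥ v = z • v ∧ v ≠ 0 := by
  rw [Module.End.hasEigenvector_iff, Module.End.mem_eigenspace_iff, toLin'_apply]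

section Kronecker

variable {R m n : Type*} [CommSemiring R] [Fintype m] [Fintype n]

theorem kronecker_mulVec_mul (A : Matrix m m R) (B : Matrix n n R) (v : m → R) (w : n → R) :
    (A ⊗ₖ B) *ᵥ (fun p => v p.1 * w p.2) = fun p => (A *ᵥ v) p.1 * (B *ᵥ w) p.2 := by
  funext p
  simp only [mulVec, dotProduct, Fintype.sum_prod_type, kroneckerMap_apply, Finset.sum_mul_sum]
  exact Finset.sum_congr rfl fun k _ => Finset.sum_congr rfl fun l _ => by ring

theorem kronecker_one_mulVec_apply [DecidableEq n] (A : Matrix m m R) (v : m × n → R)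
    (i : m) (j : n) :
    ((A ⊗ₖ (1 : Matrix n n R)) *ᵥ v) (i, j) = (A *ᵥ fun k => v (k, j)) i := by
  simp [mulVec, dotProduct, Fintype.sum_prod_type, one_apply]

theorem one_kronecker_mulVec_apply [DecidableEq m] (B : Matrix n n R) (v : m × n → R)
    (i : m) (j : n) :
    (((1 : Matrix m m R) ⊗ₖ B) *ᵥ v) (i, j) = (B *ᵥ fun k => v (i, k)) j := by
  simp [mulVec, dotProduct, Fintype.sum_prod_type, one_apply]

theorem kronecker_one_mul_one_kronecker [DecidableEq m] [DecidableEq n]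
    (A : Matrix m m R) (B : Matrix n n R) :
    (A ⊗ₖ (1 : Matrix n n R)) * ((1 : Matrix m m R) ⊗ₖ B) = A ⊗ₖ B := by
  rw [← mul_kronecker_mul, Matrix.mul_one, Matrix.one_mul]

theorem commute_kronecker_one_one_kronecker [DecidableEq m] [DecidableEq n]
    (A : Matrix m m R) (B : Matrix n n R) :
    Commute (A ⊗ₖ (1 : Matrix n n R)) ((1 : Matrix m m R) ⊗ₖ B) := by
  rw [Commute, SemiconjBy, kronecker_one_mul_one_kronecker, ← mul_kronecker_mul,
    Matrix.mul_one, Matrix.one_mul]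

end Kronecker

section Slices

variable {R m n : Type*} [CommRing R] [Fintype m] [Fintype n]

theorem hasEigenvalue_of_hasEigenvector_kronecker_one [DecidableEq m] [DecidableEq n]
    {A : Matrix m m R} {l : R} {v : m × n → R}
    (hv : Module.End.HasEigenvector (toLin' (A ⊗ₖ (1 : Matrix n n R))) l v) :
    Module.End.HasEigenvalue (toLin' A) l := by
  rw [hasEigenvector_toLin'_iff] at hv
  obtain ⟨⟨i, j⟩, hij⟩ := Function.ne_iff.mp hv.2
  refine Module.End.hasEigenvalue_of_hasEigenvector (x := fun k => v (k, j))
    (hasEigenvector_toLin'_iff.mpr ⟨funext fun k => ?_, Function.ne_iff.mpr ⟨i, hij⟩⟩)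
  rw [← kronecker_one_mulVec_apply, hv.1]
  rfl

theorem hasEigenvalue_of_hasEigenvector_one_kronecker [DecidableEq m] [DecidableEq n]
    {B : Matrix n n R} {μ : R} {v : m × n → R}
    (hv : Module.End.HasEigenvector (toLin' ((1 : Matrix m m R) ⊗ₖ B)) μ v) :
    Module.End.HasEigenvalue (toLin' B) μ := by
  rw [hasEigenvector_toLin'_iff] at hv
  obtain ⟨⟨i, j⟩, hij⟩ := Function.ne_iff.mp hv.2
  refine Module.End.hasEigenvalue_of_hasEigenvector (x := fun k => v (i, k))
    (hasEigenvector_toLin'_iff.mpr ⟨funext fun k => ?_, Function.ne_iff.mpr ⟨j, hij⟩⟩)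
  rw [← one_kronecker_mulVec_apply, hv.1]
  rfl

end Slices

section KroneckerBilin

variable {R m n : Type*} [CommRing R] [Fintype m] [Fintype n] [DecidableEq m] [DecidableEq n]
  (c₀ c₁ c₂ c₃ : R) (A : Matrix m m R) (B : Matrix n n R)

def kroneckerBilin : Matrix (m × n) (m × n) R :=
  c₀ • 1 + c₁ • (A ⊗ₖ 1) + c₂ • (1 ⊗ₖ B) + c₃ • (A ⊗ₖ B)

theorem kroneckerBilin_mulVec {v : m × n → R} {l μ : R}
    (hA : (A ⊗ₖ (1 : Matrix n n R)) *ᵥ v = l • v)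
    (hB : ((1 : Matrix m m R) ⊗ₖ B) *ᵥ v = μ • v) :
    kroneckerBilin c₀ c₁ c₂ c₃ A B *ᵥ v =
      (c₀ + c₁ * l + c₂ * μ + c₃ * l * μ) • v := by
  have hAB : (A ⊗ₖ B) *ᵥ v = (l * μ) • v := by
    rw [← kronecker_one_mul_one_kronecker, ← mulVec_mulVec, hB, mulVec_smul, hA, smul_smul,
      mul_comm]
  simp only [kroneckerBilin, add_mulVec, smul_mulVec, one_mulVec, hA, hB, hAB, smul_smul,
    add_smul, mul_assoc]

theorem commute_kroneckerBilin_kronecker_one :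
    Commute (kroneckerBilin c₀ c₁ c₂ c₃ A B) (A ⊗ₖ (1 : Matrix n n R)) := by
  have hP := commute_kronecker_one_one_kronecker A B
  rw [kroneckerBilin, ← kronecker_one_mul_one_kronecker A B]
  exact ((((Commute.one_left _).smul_left _).add_left ((Commute.refl _).smul_left _)).add_left
    (hP.symm.smul_left _)).add_left (((Commute.refl _).mul_left hP.symm).smul_left _)

theorem commute_kroneckerBilin_one_kronecker :
    Commute (kroneckerBilin c₀ c₁ c₂ c₃ A B) ((1 : Matrix m m R) ⊗ₖ B) := by
  have hP := commute_kronecker_one_one_kronecker A B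
  rw [kroneckerBilin, ← kronecker_one_mul_one_kronecker A B]
  exact ((((Commute.one_left _).smul_left _).add_left (hP.smul_left _)).add_left
    ((Commute.refl _).smul_left _)).add_left ((hP.mul_left (Commute.refl _)).smul_left _)

theorem hasEigenvalue_kroneckerBilin [IsDomain R] {l μ : R}
    (hl : Module.End.HasEigenvalue (toLin' A) l) (hμ : Module.End.HasEigenvalue (toLin' B) μ) :
    Module.End.HasEigenvalue (toLin' (kroneckerBilin c₀ c₁ c₂ c₃ A B))
      (c₀ + c₁ * l + c₂ * μ + c₃ * l * μ) := by
  obtain ⟨v, hv⟩ := hl.exists_hasEigenvector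
  obtain ⟨w, hw⟩ := hμ.exists_hasEigenvector
  rw [hasEigenvector_toLin'_iff] at hv hw
  obtain ⟨i, hi⟩ := Function.ne_iff.mp hv.2
  obtain ⟨j, hj⟩ := Function.ne_iff.mp hw.2
  refine Module.End.hasEigenvalue_of_hasEigenvector (x := fun p => v p.1 * w p.2)
    (hasEigenvector_toLin'_iff.mpr ⟨kroneckerBilin_mulVec _ _ _ _ _ _ ?_ ?_,
      Function.ne_iff.mpr ⟨(i, j), mul_ne_zero hi hj⟩⟩)
  · rw [kronecker_mulVec_mul, hv.1, one_mulVec]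
    funext p
    simp [mul_assoc]
  · rw [kronecker_mulVec_mul, hw.1, one_mulVec]
    funext p
    simp only [Pi.smul_apply, smul_eq_mul]
    ring

end KroneckerBilin


theorem exists_eq_of_hasEigenvalue_kroneckerBilin {K m n : Type*} [Field K] [IsAlgClosed K]
    [Fintype m] [Fintype n] [DecidableEq m] [DecidableEq n]
    {c₀ c₁ c₂ c₃ : K} {A : Matrix m m K} {B : Matrix n n K} {z : K}
    (hz : Module.End.HasEigenvalue (toLin' (kroneckerBilin c₀ c₁ c₂ c₃ A B)) z) :
    ∃ l μ, Module.End.HasEigenvalue (toLin' A) l ∧ Module.End.HasEigenvalue (toLin' B) μ ∧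
      z = c₀ + c₁ * l + c₂ * μ + c₃ * l * μ := by
  set J := kroneckerBilin c₀ c₁ c₂ c₃ A B
  have hmaps {M : Matrix (m × n) (m × n) K} (h : Commute J M) :
      Set.MapsTo (toLin' M) (Module.End.eigenspace (toLin' J) z)
        (Module.End.eigenspace (toLin' J) z) :=
    Module.End.mapsTo_genEigenspace_of_comm (h.map toLinAlgEquiv') z 1
  obtain ⟨l, μ, v, hvJ, hvA, hvB⟩ := Module.End.exists_common_hasEigenvector_mem
    (f := toLin' (A ⊗ₖ 1)) (g := toLin' (1 ⊗ₖ B))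
    ((commute_kronecker_one_one_kronecker A B).map toLinAlgEquiv') hz
    (hmaps (commute_kroneckerBilin_kronecker_one ..))
    (hmaps (commute_kroneckerBilin_one_kronecker ..))
  refine ⟨l, μ, hasEigenvalue_of_hasEigenvector_kronecker_one hvA,
    hasEigenvalue_of_hasEigenvector_one_kronecker hvB, ?_⟩
  rw [hasEigenvector_toLin'_iff] at hvA hvB
  have hJv := Module.End.mem_eigenspace_iff.mp hvJ
  rw [toLin'_apply, kroneckerBilin_mulVec _ _ _ _ _ _ hvA.1 hvB.1] at hJv
  exact smul_left_injective K hvA.2 hJv.symm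

end Matrix

theorem mem_specC_iff_aeval {n : Type*} [Fintype n] [DecidableEq n] (M : Matrix n n ℝ)
    (z : ℂ) : z ∈ specC M ↔ aeval z M.charpoly = 0 := by
  change ((M.map (algebraMap ℝ ℂ)).charpoly).IsRoot z ↔ _
  rw [charpoly_map, IsRoot.def, eval_map_algebraMap]

theorem conj_mem_specC {n : Type*} [Fintype n] [DecidableEq n] {M : Matrix n n ℝ} {z : ℂ}
    (hz : z ∈ specC M) : starRingEnd ℂ z ∈ specC M := by
  rw [mem_specC_iff_aeval] at hz ⊢
  rw [← Complex.conjAe_coe, aeval_algHom_apply, hz, map_zero]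

theorem mem_specC_iff_hasEigenvalue {n : Type*} [Fintype n] [DecidableEq n] (M : Matrix n n ℝ)
    (z : ℂ) : z ∈ specC M ↔ Module.End.HasEigenvalue (toLin' (M.map ofReal)) z := by
  rw [Module.End.hasEigenvalue_iff_isRoot_charpoly, Matrix.charpoly_toLin']
  rfl

theorem Jmat_map_ofReal {Na No : ℕ} (Aa : Matrix (Fin Na) (Fin Na) ℝ)
    (Ao : Matrix (Fin No) (Fin No) ℝ) (d u α γ β δ : ℝ) :
    (Jmat Aa Ao d u α γ β δ).map ofReal =
      kroneckerBilin ((-d + u * α : ℝ) : ℂ) ((u * γ : ℝ) : ℂ) ((u * β : ℝ) : ℂ)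
        ((u * δ : ℝ) : ℂ) (Aa.map ofReal) (Ao.map ofReal) := by
  ext ⟨i, j⟩ ⟨k, l⟩
  simp only [Jmat, kroneckerBilin, map_apply, Matrix.add_apply, Matrix.smul_apply,
    kroneckerMap_apply, one_apply, Prod.mk.injEq, smul_eq_mul]
  push_cast
  split_ifs <;> simp_all

theorem ηgen_eq (d u α γ β δ : ℝ) (l m : ℂ) :
    ηgen d u α γ β δ l m = ((-d + u * α : ℝ) : ℂ) + ((u * γ : ℝ) : ℂ) * l
      + ((u * β : ℝ) : ℂ) * m + ((u * δ : ℝ) : ℂ) * l * m := by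
  simp only [ηgen]
  push_cast
  ring

theorem ηgen_re (d u α γ β δ : ℝ) (l m : ℂ) :
    (ηgen d u α γ β δ l m).re = -d + u * ((α : ℂ) + γ * l + β * m + δ * l * m).re := by
  simp [ηgen]

theorem ηgen_im (d u α γ β δ : ℝ) (l m : ℂ) :
    (ηgen d u α γ β δ l m).im = u * ((γ : ℂ) * l + β * m + δ * l * m).im := by
  simp [ηgen]

theorem mem_specC_Jmat_iff {Na No : ℕ} {Aa : Matrix (Fin Na) (Fin Na) ℝ}
    {Ao : Matrix (Fin No) (Fin No) ℝ} {d u α γ β δ : ℝ} {z : ℂ} :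
    z ∈ specC (Jmat Aa Ao d u α γ β δ) ↔
      ∃ l ∈ specC Aa, ∃ m ∈ specC Ao, z = ηgen d u α γ β δ l m := by
  simp only [mem_specC_iff_hasEigenvalue, Jmat_map_ofReal, ηgen_eq]
  constructor
  · intro hz
    obtain ⟨l, m, hl, hm, rfl⟩ := exists_eq_of_hasEigenvalue_kroneckerBilin hz
    exact ⟨l, hl, m, hm, rfl⟩
  · rintro ⟨l, hl, m, hm, rfl⟩
    exact hasEigenvalue_kroneckerBilin _ _ _ _ _ _ hl hm

theorem critical_imaginary_eigenvalues_general {Na No : ℕ}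
    (Aa : Matrix (Fin Na) (Fin Na) ℝ) (Ao : Matrix (Fin No) (Fin No) ℝ)
    (d α γ β δ K : ℝ) (hd : 0 < d)
    (hK : IsGreatest {x : ℝ | ∃ l ∈ specC Aa, ∃ m ∈ specC Ao,
        x = ((α : ℂ) + (γ : ℂ) * l + (β : ℂ) * m + (δ : ℂ) * l * m).re} K)
    (hKpos : 0 < K)
    (lamd : ℂ) (mud : ℂ) (hlamd : lamd ∈ specC Aa) (hmud : mud ∈ specC Ao)
    (hgen : ((α : ℂ) + (γ : ℂ) * lamd + (β : ℂ) * mud + (δ : ℂ) * lamd * mud).re = K) :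
    ηgen d (d / K) α γ β δ lamd mud
        = Complex.I * ((d / K) * ((γ : ℂ) * lamd + (β : ℂ) * mud
            + (δ : ℂ) * lamd * mud).im) ∧
    ηgen d (d / K) α γ β δ lamd mud ∈ specC (Jmat Aa Ao d (d / K) α γ β δ) ∧
    (starRingEnd ℂ) (ηgen d (d / K) α γ β δ lamd mud)
        ∈ specC (Jmat Aa Ao d (d / K) α γ β δ) ∧
    (∀ η ∈ specC (Jmat Aa Ao d (d / K) α γ β δ), η.re ≤ 0) ∧
    (∀ u : ℝ, (ηgen d u α γ β δ lamd mud).re = K * (u - d / K)) ∧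
    HasDerivAt (fun u : ℝ => (ηgen d u α γ β δ lamd mud).re) K (d / K) := by
  have hre (u : ℝ) : (ηgen d u α γ β δ lamd mud).re = K * (u - d / K) := by
    rw [ηgen_re, hgen]
    field_simp
    ring
  have hmem : ηgen d (d / K) α γ β δ lamd mud ∈ specC (Jmat Aa Ao d (d / K) α γ β δ) :=
    mem_specC_Jmat_iff.mpr ⟨lamd, hlamd, mud, hmud, rfl⟩
  refine ⟨Complex.ext (by simp [hre]) (by simp [ηgen_im]), hmem, conj_mem_specC hmem,
    fun z hz => ?_, hre, ?_⟩
  · obtain ⟨l, hl, m, hm, rfl⟩ := mem_specC_Jmat_iff.mp hz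
    have hbound := hK.2 ⟨l, hl, m, hm, rfl⟩
    calc (ηgen d (d / K) α γ β δ l m).re
        = -d + d / K * ((α : ℂ) + γ * l + β * m + δ * l * m).re := ηgen_re ..
      _ ≤ -d + d / K * K := by gcongr
      _ = 0 := by field_simp; ring
  · rw [funext hre]
    simpa using ((hasDerivAt_id (d / K)).sub_const (d / K)).const_mul K

/-- Purely imaginary leading eigenvalues at criticality: if `λ†, μ†` generate a leading
eigenvalue (`Re(α + γλ† + βμ† + δλ†μ†) = K > 0`), then at `u* = d/K` the eigenvalue
`η(u*, λ†, μ†) = i u* ω₀` of `J(u*)` is purely imaginary, its conjugate is also an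
eigenvalue of `J(u*)`, every eigenvalue of `J(u*)` has nonpositive real part, and
`Re(η(u, λ†, μ†)) = K (u − u*)` crosses zero at `u = u*` with derivative `K > 0`. -/
theorem critical_imaginary_eigenvalues {Na No : ℕ} (hNa : 1 ≤ Na) (hNo : 1 ≤ No)
    (Aa : Matrix (Fin Na) (Fin Na) ℝ) (Ao : Matrix (Fin No) (Fin No) ℝ)
    (d α γ β δ K : ℝ) (hd : 0 < d)
    (hK : IsGreatest {x : ℝ | ∃ l ∈ specC Aa, ∃ m ∈ specC Ao,
        x = ((α : ℂ) + (γ : ℂ) * l + (β : ℂ) * m + (δ : ℂ) * l * m).re} K)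
    (hKpos : 0 < K)
    (lamd : ℂ) (mud : ℂ) (hlamd : lamd ∈ specC Aa) (hmud : mud ∈ specC Ao)
    (hgen : ((α : ℂ) + (γ : ℂ) * lamd + (β : ℂ) * mud + (δ : ℂ) * lamd * mud).re = K) :
    ηgen d (d / K) α γ β δ lamd mud
        = Complex.I * ((d / K) * ((γ : ℂ) * lamd + (β : ℂ) * mud
            + (δ : ℂ) * lamd * mud).im) ∧
    ηgen d (d / K) α γ β δ lamd mud ∈ specC (Jmat Aa Ao d (d / K) α γ β δ) ∧
    (starRingEnd ℂ) (ηgen d (d / K) α γ β δ lamd mud)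
        ∈ specC (Jmat Aa Ao d (d / K) α γ β δ) ∧
    (∀ η ∈ specC (Jmat Aa Ao d (d / K) α γ β δ), η.re ≤ 0) ∧
    (∀ u : ℝ, (ηgen d u α γ β δ lamd mud).re = K * (u - d / K)) ∧
    HasDerivAt (fun u : ℝ => (ηgen d u α γ β δ lamd mud).re) K (d / K) :=
  critical_imaginary_eigenvalues_general Aa Ao d α γ β δ K hd hK hKpos lamd mud hlamd hmud hgen
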